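/- For every real x ≥ 1, the harmonic number satisfies the integral identity H(x) = (⌊x⌋ + ⌊x⌋²)/(2x²) + ∫_{1}^{x} (⌊y⌋ + ⌊y⌋²)/y³ dy, where H(x) = Σ_{n=1}^{⌊x⌋} 1/n. -/

import Mathlib

/-!
Write `1/k = k · k⁻²` and apply Abel summation to the weights `c k = k`, whose partial sums are
`⌊t⌋(⌊t⌋ + 1)/2`, against `f t = t⁻²`. The boundary term at `x` is `f x · ⌊x⌋(⌊x⌋ + 1)/2`, and
since `f' t = -2/t³` the integral term becomes `∫ (⌊t⌋ + ⌊t⌋²)/t³`.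
-/

open MeasureTheory Finset

lemma sum_Icc_zero_natCast (n : ℕ) :
    ∑ k ∈ Icc 0 n, (k : ℝ) = ((n : ℝ) + (n : ℝ) ^ 2) / 2 := by
  induction n with
  | zero => simp
  | succ n ih =>
    rw [sum_Icc_succ_top (Nat.zero_le _), ih]
    push_cast
    ring

lemma hasDerivAt_inv_sq {t : ℝ} (ht : t ≠ 0) :
    HasDerivAt (fun t : ℝ => (t ^ 2)⁻¹) (-2 / t ^ 3) t := by
  refine ((hasDerivAt_pow 2 t).inv (pow_ne_zero 2 ht)).congr_deriv ?_
  field_simp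
  ring

lemma integrableOn_deriv_inv_sq {a : ℝ} (ha : 0 < a) (b : ℝ) :
    IntegrableOn (deriv fun t : ℝ => (t ^ 2)⁻¹) (Set.Icc a b) := by
  have hcont : ContinuousOn (fun t : ℝ => -2 / t ^ 3) (Set.Icc a b) :=
    continuousOn_const.div (by fun_prop) fun t ht => by
      have : 0 < t := ha.trans_le ht.1
      positivity
  refine hcont.integrableOn_Icc.congr_fun (fun t ht => ?_) measurableSet_Icc
  exact ((hasDerivAt_inv_sq (ha.trans_le ht.1).ne').deriv).symm

lemma sum_Icc_one_inv_eq_add_setIntegral (x : ℝ) :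
    ∑ k ∈ Icc 1 ⌊x⌋₊, ((k : ℝ))⁻¹ = ((⌊x⌋₊ : ℝ) + (⌊x⌋₊ : ℝ) ^ 2) / (2 * x ^ 2)
        + ∫ t in Set.Ioc 1 x, ((⌊t⌋₊ : ℝ) + (⌊t⌋₊ : ℝ) ^ 2) / t ^ 3 := by
  have habel := sum_mul_eq_sub_integral_mul₀ (fun k : ℕ => (k : ℝ)) Nat.cast_zero x
    (fun t ht => (hasDerivAt_inv_sq (by linarith [ht.1] : t ≠ 0)).differentiableAt)
    (integrableOn_deriv_inv_sq one_pos x)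
  have hsum : ∑ k ∈ Icc 0 ⌊x⌋₊, ((k : ℝ) ^ 2)⁻¹ * k = ∑ k ∈ Icc 1 ⌊x⌋₊, ((k : ℝ))⁻¹ := by
    rw [← add_sum_Ioc_eq_sum_Icc (Nat.zero_le _), ← Icc_add_one_left_eq_Ioc, Nat.cast_zero, zero_pow two_ne_zero, inv_zero, zero_mul, zero_add]
    refine sum_congr rfl fun k hk => ?_
    have hk0 : (k : ℝ) ≠ 0 := by
      have := (mem_Icc.mp hk).1
      positivity
    field_simp
  have hint : ∫ t in Set.Ioc 1 x, deriv (fun t : ℝ => (t ^ 2)⁻¹) t * ∑ k ∈ Icc 0 ⌊t⌋₊, (k : ℝ)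
      = -∫ t in Set.Ioc 1 x, ((⌊t⌋₊ : ℝ) + (⌊t⌋₊ : ℝ) ^ 2) / t ^ 3 := by
    rw [← MeasureTheory.integral_neg]
    refine setIntegral_congr_fun measurableSet_Ioc fun t ht => ?_
    have ht0 : t ≠ 0 := by linarith [ht.1]
    rw [(hasDerivAt_inv_sq ht0).deriv, sum_Icc_zero_natCast]
    field_simp
  rw [← hsum, habel, hint, sum_Icc_zero_natCast]
  field_simp
  ring

/-- For `x ≥ 1`, the harmonic number satisfies
`H(x) = (⌊x⌋ + ⌊x⌋²)/(2x²) + ∫_{1}^{x} (⌊y⌋ + ⌊y⌋²)/y³ dy`. -/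
theorem harmonic_number_integral_identity
    (H : ℝ → ℝ)
    (hH : ∀ t, H t = ∑ n ∈ Finset.Icc 1 ⌊t⌋₊, ((n : ℝ))⁻¹)
    (x : ℝ) (hx : 1 ≤ x) :
    H x = ((⌊x⌋₊ : ℝ) + (⌊x⌋₊ : ℝ) ^ 2) / (2 * x ^ 2)
        + ∫ y in (1 : ℝ)..x, ((⌊y⌋₊ : ℝ) + (⌊y⌋₊ : ℝ) ^ 2) / y ^ 3 := by
  rw [hH x, sum_Icc_one_inv_eq_add_setIntegral, intervalIntegral.integral_of_le hx]
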